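/- arXiv:1612.06278 — 5 statements merged into one kernel-verified Lean document; each statement's English description precedes it below -/
import Mathlib

section
/- Let Γ be a vacuum solution of the Bianchi class B system. Then every α-limit point of Γ lies in K ∪ P_κ. Moreover, if Γ has an α-limit point lying in P_κ, then Γ is a constant solution. -/
open Real Filter Topology MeasureTheory

noncomputable def NT (κ : ℝ) (Ap Np : ℝ → ℝ) (τ : ℝ) : ℝ :=
  (1/3) * ((Np τ)^2 - κ * Ap τ)

noncomputable def qF (γ κ : ℝ) (Sp St Ap Np : ℝ → ℝ) (τ : ℝ) : ℝ :=
  (3/2)*(2-γ)*((Sp τ)^2 + St τ) + (1/2)*(3*γ-2)*(1 - Ap τ - NT κ Ap Np τ)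

noncomputable def OmF (κ : ℝ) (Sp St Ap Np : ℝ → ℝ) (τ : ℝ) : ℝ :=
  1 - (Sp τ)^2 - St τ - Ap τ - NT κ Ap Np τ

/-- A solution of the Bianchi class B system in expansion-normalised variables. -/
structure BianchiB (γ κ : ℝ) (Sp St Dl Ap Np : ℝ → ℝ) : Prop where
  hγ : γ ∈ Set.Icc (0:ℝ) 2
  diff_Sp : Differentiable ℝ Sp
  diff_St : Differentiable ℝ St
  diff_Dl : Differentiable ℝ Dl
  diff_Ap : Differentiable ℝ Ap
  diff_Np : Differentiable ℝ Np
  ev_Sp : ∀ τ, deriv Sp τ = (qF γ κ Sp St Ap Np τ - 2) * Sp τ - 2 * NT κ Ap Np τ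
  ev_St : ∀ τ, deriv St τ =
    2*(qF γ κ Sp St Ap Np τ - 2) * St τ - 4 * Sp τ * Ap τ - 4 * Dl τ * Np τ
  ev_Dl : ∀ τ, deriv Dl τ =
    2*(qF γ κ Sp St Ap Np τ + Sp τ - 1) * Dl τ + 2*(St τ - NT κ Ap Np τ) * Np τ
  ev_Ap : ∀ τ, deriv Ap τ = 2*(qF γ κ Sp St Ap Np τ + 2*Sp τ) * Ap τ
  ev_Np : ∀ τ, deriv Np τ = (qF γ κ Sp St Ap Np τ + 2*Sp τ) * Np τ + 6 * Dl τ
  con_main : ∀ τ, St τ * NT κ Ap Np τ - (Dl τ)^2 - (Sp τ)^2 * Ap τ = 0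
  con_St : ∀ τ, 0 ≤ St τ
  con_Ap : ∀ τ, 0 ≤ Ap τ
  con_NT : ∀ τ, 0 ≤ NT κ Ap Np τ
  con_sum : ∀ τ, (Sp τ)^2 + St τ + Ap τ + NT κ Ap Np τ ≤ 1

def Vacuum (κ : ℝ) (Sp St Ap Np : ℝ → ℝ) : Prop :=
  ∀ τ, OmF κ Sp St Ap Np τ = 0

def Inflationary (γ κ : ℝ) (Sp St Ap Np : ℝ → ℝ) : Prop :=
  (∀ τ, 0 < OmF κ Sp St Ap Np τ) ∧ γ ∈ Set.Ico (0:ℝ) (2/3)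

def traj (Sp St Dl Ap Np : ℝ → ℝ) (τ : ℝ) : ℝ × ℝ × ℝ × ℝ × ℝ :=
  (Sp τ, St τ, Dl τ, Ap τ, Np τ)

def AlphaLimitPt (Sp St Dl Ap Np : ℝ → ℝ) (p : ℝ × ℝ × ℝ × ℝ × ℝ) : Prop :=
  ∃ t : ℕ → ℝ, Tendsto t atTop atBot ∧
    Tendsto (fun n => traj Sp St Dl Ap Np (t n)) atTop (𝓝 p)

def Kasner : Set (ℝ × ℝ × ℝ × ℝ × ℝ) :=
  {p | ∃ s, s ∈ Set.Icc (-1:ℝ) 1 ∧ p = (s, 1 - s^2, 0, 0, 0)}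

def PlaneWave (κ : ℝ) : Set (ℝ × ℝ × ℝ × ℝ × ℝ) :=
  {p | ∃ s n : ℝ, -1 < s ∧ n^2 = (1+s)*(κ*(1+s) - 3*s) ∧ p = (s, -s*(1+s), 0, (1+s)^2, n)}

def IsConstSol (Sp St Dl Ap Np : ℝ → ℝ) : Prop :=
  ∀ τ, traj Sp St Dl Ap Np τ = traj Sp St Dl Ap Np 0

/-- `BigO f a` : `f = O(e^{a τ})` as `τ → −∞`. -/
def BigO (f : ℝ → ℝ) (a : ℝ) : Prop :=
  ∃ C > 0, ∃ τ₀ : ℝ, ∀ τ ≤ τ₀, |f τ| ≤ C * Real.exp (a * τ)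

open scoped Classical in
noncomputable def PiVal (γ s : ℝ) (vac : Prop) : ℝ :=
  if vac then 4 + 4*s else min (6 - 3*γ) (4 + 4*s)

open scoped Classical in
noncomputable def PiBarVal (γ s : ℝ) (vac : Prop) : ℝ :=
  if vac then 4 + 4*s - 4*Real.sqrt (3*(1-s^2))
  else min (6 - 3*γ) (4 + 4*s - 4*Real.sqrt (3*(1-s^2)))

/-!
Along a vacuum orbit the function `Ã − (1 + Σ₊)²` is non-decreasing: its derivative is `4B` with
`B = Ã (2Σ₊(1 + Σ₊) + Σ̃) + Ñ (1 + Σ₊)²`, and on the constraint set `Σ̃ B` is a sum of squares, so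
`B ≥ 0`. Being bounded, the function converges as `τ → −∞`; since the orbit is uniformly
continuous, `B` must vanish at every α-limit point, and the vacuum states with `B = 0` are exactly
those of `K ∪ P_κ`. On `P_κ` the function equals its upper bound `0`, so an α-limit point in `P_κ`
forces it to vanish identically along the orbit; then `B ≡ 0`, the orbit stays in `K ∪ P_κ`, and
there the vector field vanishes.
-/

open Set

local notation "ℝ⁵" => ℝ × ℝ × ℝ × ℝ × ℝ

theorem nonpos_of_hasDerivAt_of_tendsto_atBot {E : Type*} [PseudoMetricSpace E] {x : ℝ → E}
    (hx : UniformContinuous x) {Φ : E → ℝ} (hΦ : Continuous Φ) {G : ℝ → ℝ}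
    (hG : ∀ τ, HasDerivAt G (Φ (x τ)) τ) {L : ℝ} (hGL : Tendsto G atBot (𝓝 L))
    {u : ℕ → ℝ} (hu : Tendsto u atTop atBot) {p : E} (hp : Tendsto (x ∘ u) atTop (𝓝 p)) :
    Φ p ≤ 0 := by
  by_contra! hpos
  obtain ⟨δ, hδ, hball⟩ : ∃ δ > 0, ∀ y, dist y p < δ → Φ p / 2 < Φ y :=
    Metric.eventually_nhds_iff.mp (hΦ.continuousAt.eventually (lt_mem_nhds (half_lt_self hpos)))
  obtain ⟨ε, hε, hxε⟩ := Metric.uniformContinuous_iff.mp hx (δ / 2) (half_pos hδ)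
  have hGcont : Continuous G := continuous_iff_continuousAt.2 fun τ => (hG τ).continuousAt
  have hgrowth : ∀ᶠ k in atTop, Φ p / 2 * (ε / 2) < G (u k + ε / 2) - G (u k) := by
    filter_upwards [Metric.tendsto_nhds.mp hp (δ / 2) (half_pos hδ)] with k hk
    obtain ⟨ξ, hξ, hslope⟩ := exists_hasDerivAt_eq_slope G (fun τ => Φ (x τ))
      (lt_add_of_pos_right (u k) (half_pos hε)) hGcont.continuousOn (fun σ _ => hG σ)
    have hξk : dist ξ (u k) < ε := by
      rw [Real.dist_eq, abs_lt]; constructor <;> linarith [hξ.1, hξ.2]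
    have hξp : dist (x ξ) p < δ := by
      linarith [dist_triangle (x ξ) (x (u k)) p, hxε hξk, show dist (x (u k)) p < δ / 2 from hk]
    have := hball _ hξp
    rw [hslope, add_sub_cancel_left, lt_div_iff₀ (half_pos hε)] at this
    exact this
  have hinc : Tendsto (fun k => G (u k + ε / 2) - G (u k)) atTop (𝓝 0) := by
    simpa using (hGL.comp (tendsto_atBot_add_const_right _ _ hu)).sub (hGL.comp hu)
  obtain ⟨k, hk, hk'⟩ :=
    (hgrowth.and (hinc.eventually (gt_mem_nhds (by positivity : 0 < Φ p / 2 * (ε / 2))))).exists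
  exact lt_asymm hk hk'

noncomputable section States

variable {γ κ : ℝ} {s t d a m : ℝ} {p : ℝ⁵}

-- `Ñ`, `q` and the right-hand side of the evolution equations at a state `(Σ₊, Σ̃, Δ, Ã, N₊)`.
def ntildeAt (κ : ℝ) (p : ℝ⁵) : ℝ :=
  (1/3) * (p.2.2.2.2^2 - κ * p.2.2.2.1)

def decelAt (γ κ : ℝ) (p : ℝ⁵) : ℝ :=
  (3/2)*(2-γ)*(p.1^2 + p.2.1) + (1/2)*(3*γ-2)*(1 - p.2.2.2.1 - ntildeAt κ p)

def bianchiField (γ κ : ℝ) (p : ℝ⁵) : ℝ⁵ :=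
  ((decelAt γ κ p - 2) * p.1 - 2 * ntildeAt κ p,
    2*(decelAt γ κ p - 2) * p.2.1 - 4 * p.1 * p.2.2.2.1 - 4 * p.2.2.1 * p.2.2.2.2,
    2*(decelAt γ κ p + p.1 - 1) * p.2.2.1 + 2*(p.2.1 - ntildeAt κ p) * p.2.2.2.2,
    2*(decelAt γ κ p + 2*p.1) * p.2.2.2.1,
    (decelAt γ κ p + 2*p.1) * p.2.2.2.2 + 6 * p.2.2.1)

def vacuumStates (κ : ℝ) : Set ℝ⁵ :=
  {p | 0 ≤ p.2.1 ∧ 0 ≤ p.2.2.2.1 ∧ 0 ≤ ntildeAt κ p ∧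
    p.1^2 + p.2.1 + p.2.2.2.1 + ntildeAt κ p = 1 ∧
    p.2.1 * ntildeAt κ p - p.2.2.1^2 - p.1^2 * p.2.2.2.1 = 0}

def lyapunov (p : ℝ⁵) : ℝ :=
  p.2.2.2.1 - (1 + p.1)^2

def lyapunovRate (κ : ℝ) (p : ℝ⁵) : ℝ :=
  p.2.2.2.1 * (2*p.1*(1+p.1) + p.2.1) + ntildeAt κ p * (1+p.1)^2

theorem mul_rate_eq_sum_sq (hcon : t*m - d^2 - s^2*a = 0) :
    t * (a*(2*s*(1+s) + t) + m*(1+s)^2) = a*(t + s*(1+s))^2 + d^2*(1+s)^2 := by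
  linear_combination (1+s)^2 * hcon

theorem rate_nonneg_of_constraint (ht : 0 ≤ t) (ha : 0 ≤ a) (hm : 0 ≤ m)
    (hcon : t*m - d^2 - s^2*a = 0) : 0 ≤ a*(2*s*(1+s) + t) + m*(1+s)^2 := by
  rcases ht.eq_or_lt with rfl | ht
  · have hsa : s^2*a = 0 := by nlinarith [sq_nonneg d, mul_nonneg (sq_nonneg s) ha]
    have hsa' : s*a = 0 := by
      have : (s*a)^2 = 0 := by linear_combination a * hsa
      exact pow_eq_zero_iff two_ne_zero |>.mp this
    nlinarith [mul_nonneg hm (sq_nonneg (1+s))]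
  · refine nonneg_of_mul_nonneg_right ?_ ht
    rw [mul_rate_eq_sum_sq hcon]
    positivity

theorem lyapunovRate_nonneg (hp : p ∈ vacuumStates κ) : 0 ≤ lyapunovRate κ p :=
  rate_nonneg_of_constraint hp.1 hp.2.1 hp.2.2.1 hp.2.2.2.2

theorem le_one_add_sq_of_constraint (ht : 0 ≤ t) (hm : 0 ≤ m) (ha : 0 ≤ a)
    (hsum : s^2 + t + a + m = 1) (hcon : t*m - d^2 - s^2*a = 0) : a ≤ (1+s)^2 := by
  -- `(t + m)² - 4tm = (t - m)² ≥ 0`, where `t + m = 1 - s² - a` and `tm ≥ s²a`.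
  have h : 0 ≤ (a - (1-s)^2) * (a - (1+s)^2) := by nlinarith [sq_nonneg (t - m), sq_nonneg d]
  nlinarith

theorem lyapunov_nonpos (hp : p ∈ vacuumStates κ) : lyapunov p ≤ 0 :=
  sub_nonpos.mpr (le_one_add_sq_of_constraint hp.1 hp.2.2.1 hp.2.1 hp.2.2.2.1 hp.2.2.2.2)

theorem isClosed_vacuumStates (κ : ℝ) : IsClosed (vacuumStates κ) := by
  simp only [vacuumStates, ntildeAt, ofPred_and]
  refine .inter (isClosed_le ?_ ?_) (.inter (isClosed_le ?_ ?_) (.inter (isClosed_le ?_ ?_)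
    (.inter (isClosed_eq ?_ ?_) (isClosed_eq ?_ ?_)))) <;> fun_prop

theorem vacuumStates_subset_box (κ : ℝ) :
    vacuumStates κ ⊆ Icc (-1) 1 ×ˢ Icc 0 1 ×ˢ Icc (-1) 1 ×ˢ Icc 0 1 ×ˢ
      Icc (-(2 + |κ|)) (2 + |κ|) := by
  rintro ⟨s, t, d, a, n⟩ ⟨ht, ha, hm, hsum, hcon⟩
  simp only [ntildeAt] at hm hsum hcon
  have hs := abs_le_of_sq_le_sq' (show s^2 ≤ 1^2 by nlinarith) zero_le_one
  have hd := abs_le_of_sq_le_sq' (show d^2 ≤ 1^2 by nlinarith) zero_le_one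
  have hn := abs_le_of_sq_le_sq' (show n^2 ≤ (2 + |κ|)^2 by
    nlinarith [abs_nonneg κ, neg_abs_le κ, le_abs_self κ]) (by positivity)
  simp only [mem_prod, mem_Icc]
  refine ⟨hs, ⟨ht, ?_⟩, hd, ⟨ha, ?_⟩, hn⟩ <;> nlinarith

theorem isCompact_vacuumStates (κ : ℝ) : IsCompact (vacuumStates κ) :=
  .of_isClosed_subset (isCompact_Icc.prod (isCompact_Icc.prod (isCompact_Icc.prod
    (isCompact_Icc.prod isCompact_Icc)))) (isClosed_vacuumStates κ) (vacuumStates_subset_box κ)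

theorem decelAt_of_mem_vacuumStates (hp : p ∈ vacuumStates κ) :
    decelAt γ κ p = 2 * (p.1^2 + p.2.1) := by
  rw [decelAt]
  linear_combination (-(3*γ-2)/2) * hp.2.2.2.1

theorem mem_kasner_union_planeWave (hp : p ∈ vacuumStates κ) (hB : lyapunovRate κ p = 0) :
    p ∈ Kasner ∪ PlaneWave κ := by
  obtain ⟨s, t, d, a, n⟩ := p
  obtain ⟨ht, ha, hm, hsum, hcon⟩ := hp
  dsimp only at ht ha hsum hcon
  set m := ntildeAt κ (s, t, d, a, n) with hm_def
  have hn : n^2 = 3*m + κ*a := by rw [hm_def, ntildeAt]; ring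
  replace hB : a*(2*s*(1+s) + t) + m*(1+s)^2 = 0 := hB
  have hsq : a*(t + s*(1+s))^2 + d^2*(1+s)^2 = 0 := by
    rw [← mul_rate_eq_sum_sq hcon, hB, mul_zero]
  obtain ⟨hsq₁, hsq₂⟩ := (add_eq_zero_iff_of_nonneg (by positivity) (by positivity)).mp hsq
  rcases ha.eq_or_lt with rfl | ha
  · have hm0 : m = 0 := by
      rcases mul_eq_zero.mp (show m*(1+s)^2 = 0 by linarith) with hm0 | hs
      · exact hm0
      · have : s = -1 := by linarith [pow_eq_zero_iff two_ne_zero |>.mp hs]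
        subst this
        linarith
    have hd : d = 0 := pow_eq_zero_iff two_ne_zero |>.mp (by nlinarith)
    have hn0 : n = 0 := pow_eq_zero_iff two_ne_zero |>.mp (by rw [hn, hm0]; ring)
    have hs := abs_le_of_sq_le_sq' (show s^2 ≤ 1^2 by linarith) zero_le_one
    left
    exact ⟨s, hs, by rw [hd, hn0, show t = 1 - s^2 by linarith]⟩
  · have ht' : t = -s*(1+s) := by
      have := (mul_eq_zero.mp hsq₁).resolve_left ha.ne'
      linear_combination pow_eq_zero_iff two_ne_zero |>.mp this
    have hs : -1 < s := by
      by_contra! hs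
      nlinarith
    have hd : d = 0 := by
      have := (mul_eq_zero.mp hsq₂).resolve_right (pow_pos (by linarith) 2).ne'
      exact pow_eq_zero_iff two_ne_zero |>.mp this
    have ham : a + m = 1 + s := by linear_combination hsum - ht'
    have hB' : (1+s) * (a*s + m*(1+s)) = 0 := by linear_combination hB - a * ht'
    have ha' : a = (1+s)^2 := by
      have := (mul_eq_zero.mp hB').resolve_left (by linarith)
      linear_combination -this + (1+s) * ham
    right
    refine ⟨s, n, hs, by rw [hn]; linear_combination 3 * ham + (κ - 3) * ha', ?_⟩
    rw [ht', hd, ha']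

theorem bianchiField_eq_zero (hp : p ∈ Kasner ∪ PlaneWave κ) : bianchiField γ κ p = 0 := by
  rcases hp with ⟨s, -, rfl⟩ | ⟨s, n, -, hn, rfl⟩
  · simp only [bianchiField, decelAt, ntildeAt, Prod.mk_eq_zero]
    refine ⟨?_, ?_, ?_, ?_, ?_⟩ <;> ring
  · have hm : ntildeAt κ (s, -s*(1+s), 0, (1+s)^2, n) = -s*(1+s) := by
      rw [ntildeAt]
      linear_combination (1/3) * hn
    have hq : decelAt γ κ (s, -s*(1+s), 0, (1+s)^2, n) = -2*s := by
      rw [decelAt, hm]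
      ring
    simp only [bianchiField, hm, hq, Prod.mk_eq_zero]
    refine ⟨?_, ?_, ?_, ?_, ?_⟩ <;> ring

theorem lyapunov_eq_zero_of_mem_planeWave (hp : p ∈ PlaneWave κ) : lyapunov p = 0 := by
  obtain ⟨s, n, -, -, rfl⟩ := hp
  simp [lyapunov]

end States

namespace BianchiB

variable {γ κ : ℝ} {Sp St Dl Ap Np : ℝ → ℝ}
  (hsol : BianchiB γ κ Sp St Dl Ap Np) (hvac : Vacuum κ Sp St Ap Np)
include hsol

theorem hasDerivAt_traj (τ : ℝ) :
    HasDerivAt (traj Sp St Dl Ap Np) (bianchiField γ κ (traj Sp St Dl Ap Np τ)) τ := by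
  have h := (hsol.diff_Sp τ).hasDerivAt.prodMk <| (hsol.diff_St τ).hasDerivAt.prodMk <|
    (hsol.diff_Dl τ).hasDerivAt.prodMk <| (hsol.diff_Ap τ).hasDerivAt.prodMk
      (hsol.diff_Np τ).hasDerivAt
  rw [hsol.ev_Sp, hsol.ev_St, hsol.ev_Dl, hsol.ev_Ap, hsol.ev_Np] at h
  exact h

include hvac

theorem traj_mem_vacuumStates (τ : ℝ) : traj Sp St Dl Ap Np τ ∈ vacuumStates κ := by
  refine ⟨hsol.con_St τ, hsol.con_Ap τ, hsol.con_NT τ, ?_, hsol.con_main τ⟩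
  have h := hvac τ
  rw [OmF] at h
  change (Sp τ)^2 + St τ + Ap τ + NT κ Ap Np τ = 1
  linarith

theorem uniformContinuous_traj : UniformContinuous (traj Sp St Dl Ap Np) := by
  have hcont : Continuous (bianchiField γ κ) := by
    unfold bianchiField decelAt ntildeAt
    fun_prop
  obtain ⟨C, hC⟩ := (isCompact_vacuumStates κ).exists_bound_of_continuousOn hcont.continuousOn
  have hlip : LipschitzWith C.toNNReal (traj Sp St Dl Ap Np) :=
    lipschitzOnWith_univ.1 <| convex_univ.lipschitzOnWith_of_nnnorm_hasDerivWithin_le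
      (fun τ _ => (hsol.hasDerivAt_traj τ).hasDerivWithinAt) fun τ _ => by
        rw [← NNReal.coe_le_coe, coe_nnnorm]
        exact (hC _ (hsol.traj_mem_vacuumStates hvac τ)).trans (Real.le_coe_toNNReal C)
  exact hlip.uniformContinuous

theorem hasDerivAt_lyapunov_traj (τ : ℝ) :
    HasDerivAt (fun τ => lyapunov (traj Sp St Dl Ap Np τ))
      (4 * lyapunovRate κ (traj Sp St Dl Ap Np τ)) τ := by
  have h := (hsol.diff_Ap τ).hasDerivAt.fun_sub
    (((hsol.diff_Sp τ).hasDerivAt.const_add 1).fun_pow 2)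
  refine h.congr_deriv ?_
  have hmem := hsol.traj_mem_vacuumStates hvac τ
  have hq : qF γ κ Sp St Ap Np τ = 2 * ((Sp τ)^2 + St τ) := decelAt_of_mem_vacuumStates hmem
  have hsum := hmem.2.2.2.1
  rw [hsol.ev_Ap, hsol.ev_Sp, hq]
  simp only [lyapunovRate, traj, ntildeAt, NT] at hsum ⊢
  linear_combination (-4 * Sp τ * (1 + Sp τ)) * hsum

theorem monotone_lyapunov_traj : Monotone (fun τ => lyapunov (traj Sp St Dl Ap Np τ)) :=
  monotone_of_hasDerivAt_nonneg (hsol.hasDerivAt_lyapunov_traj hvac) fun τ =>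
    mul_nonneg zero_le_four (lyapunovRate_nonneg (hsol.traj_mem_vacuumStates hvac τ))

theorem tendsto_lyapunov_traj_atBot :
    Tendsto (fun τ => lyapunov (traj Sp St Dl Ap Np τ)) atBot
      (𝓝 (⨅ τ, lyapunov (traj Sp St Dl Ap Np τ))) := by
  have hbdd : BddBelow (lyapunov '' vacuumStates κ) :=
    (isCompact_vacuumStates κ).bddBelow_image (by unfold lyapunov; fun_prop)
  refine tendsto_atBot_ciInf (hsol.monotone_lyapunov_traj hvac) (hbdd.mono ?_)
  rintro _ ⟨τ, rfl⟩
  exact mem_image_of_mem _ (hsol.traj_mem_vacuumStates hvac τ)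

theorem isConstSol_of_lyapunov_traj_eq_zero (h : ∀ τ, lyapunov (traj Sp St Dl Ap Np τ) = 0) :
    IsConstSol Sp St Dl Ap Np := by
  have hrate τ : lyapunovRate κ (traj Sp St Dl Ap Np τ) = 0 := by
    have hderiv := (hsol.hasDerivAt_lyapunov_traj hvac τ).deriv
    rw [funext h, deriv_const] at hderiv
    linarith
  have hfield τ : deriv (traj Sp St Dl Ap Np) τ = 0 :=
    (hsol.hasDerivAt_traj τ).deriv.trans <| bianchiField_eq_zero <|
      mem_kasner_union_planeWave (hsol.traj_mem_vacuumStates hvac τ) (hrate τ)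
  exact fun τ => is_const_of_deriv_eq_zero
    (fun σ => (hsol.hasDerivAt_traj σ).differentiableAt) hfield τ 0

end BianchiB

namespace AlphaLimitPt

variable {γ κ : ℝ} {Sp St Dl Ap Np : ℝ → ℝ} {p : ℝ⁵}
  (hsol : BianchiB γ κ Sp St Dl Ap Np) (hvac : Vacuum κ Sp St Ap Np)
  (hp : AlphaLimitPt Sp St Dl Ap Np p)
include hsol hvac hp

theorem mem_vacuumStates : p ∈ vacuumStates κ :=
  let ⟨_, _, hlim⟩ := hp
  (isClosed_vacuumStates κ).mem_of_tendsto hlim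
    (Eventually.of_forall fun _ => hsol.traj_mem_vacuumStates hvac _)

theorem lyapunovRate_eq_zero : lyapunovRate κ p = 0 := by
  have hnonneg := lyapunovRate_nonneg (hp.mem_vacuumStates hsol hvac)
  obtain ⟨u, hu, hlim⟩ := hp
  have hcont : Continuous fun p => 4 * lyapunovRate κ p := by
    unfold lyapunovRate ntildeAt
    fun_prop
  have := nonpos_of_hasDerivAt_of_tendsto_atBot (hsol.uniformContinuous_traj hvac) hcont
    (hsol.hasDerivAt_lyapunov_traj hvac) (hsol.tendsto_lyapunov_traj_atBot hvac) hu hlim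
  linarith

theorem lyapunov_eq_iInf : lyapunov p = ⨅ τ, lyapunov (traj Sp St Dl Ap Np τ) := by
  obtain ⟨u, hu, hlim⟩ := hp
  have hcont : Continuous lyapunov := by
    unfold lyapunov
    fun_prop
  exact tendsto_nhds_unique ((hcont.tendsto p).comp hlim)
    ((hsol.tendsto_lyapunov_traj_atBot hvac).comp hu)

end AlphaLimitPt

theorem stmt0 (γ κ : ℝ) (Sp St Dl Ap Np : ℝ → ℝ)
    (hsol : BianchiB γ κ Sp St Dl Ap Np)
    (hvac : Vacuum κ Sp St Ap Np) :
    (∀ p : ℝ × ℝ × ℝ × ℝ × ℝ, AlphaLimitPt Sp St Dl Ap Np p → p ∈ Kasner ∪ PlaneWave κ) ∧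
    ((∃ p ∈ PlaneWave κ, AlphaLimitPt Sp St Dl Ap Np p) → IsConstSol Sp St Dl Ap Np) := by
  refine ⟨fun p hp => mem_kasner_union_planeWave (hp.mem_vacuumStates hsol hvac)
    (hp.lyapunovRate_eq_zero hsol hvac), ?_⟩
  rintro ⟨p, hpP, hp⟩
  have hinf : ⨅ τ, lyapunov (traj Sp St Dl Ap Np τ) = 0 :=
    (hp.lyapunov_eq_iInf hsol hvac).symm.trans (lyapunov_eq_zero_of_mem_planeWave hpP)
  refine hsol.isConstSol_of_lyapunov_traj_eq_zero hvac fun τ => le_antisymm ?_ ?_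
  · exact lyapunov_nonpos (hsol.traj_mem_vacuumStates hvac τ)
  · exact hinf ▸ (hsol.monotone_lyapunov_traj hvac).le_of_tendsto
      (hsol.tendsto_lyapunov_traj_atBot hvac) τ
end

section
/- Let Γ be an inflationary solution of the Bianchi class B system. Then (Σ₊, Σ̃, Δ, Ã, N₊)(τ) → (0,0,0,0,0) as τ → +∞. -/
open Real Filter Topology MeasureTheory

/-
Ω' = (2q - (3γ - 2)) Ω, and 2q - (3γ - 2) = 4(Σ₊² + Σ̃) + (2 - 3γ)(1 - Ω). For γ < 2/3 this gives
the logistic inequality Ω' ≥ (2 - 3γ)(1 - Ω)Ω, so a positive Ω increases to 1. Every variable is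
then controlled by 1 - Ω = Σ₊² + Σ̃ + Ã + Ñ: Σ̃, Ã, Ñ and Σ₊² are bounded by it, N₊² = 3Ñ + κÃ by
(3 + |κ|)(1 - Ω), and Δ² = Σ̃Ñ - Σ₊²Ã by (1 - Ω)².
-/

theorem tendsto_zero_of_sq_le {α : Type*} {l : Filter α} {x g : α → ℝ}
    (hg : Tendsto g l (𝓝 0)) (hx : ∀ t, x t ^ 2 ≤ g t) : Tendsto x l (𝓝 0) := by
  have hsqrt : Tendsto (fun t => √(g t)) l (𝓝 0) := by
    simpa using hg.sqrt
  refine squeeze_zero_norm (fun t => ?_) hsqrt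
  rw [Real.norm_eq_abs, ← Real.sqrt_sq_eq_abs]
  exact Real.sqrt_le_sqrt (hx t)

theorem tendsto_one_of_logistic_le_deriv {f : ℝ → ℝ} {c : ℝ} (hc : 0 < c)
    (hf : Differentiable ℝ f) (hpos : ∀ t, 0 < f t) (hle : ∀ t, f t ≤ 1)
    (hderiv : ∀ t, c * (1 - f t) * f t ≤ deriv f t) : Tendsto f atTop (𝓝 1) := by
  have hmono : Monotone f := monotone_of_deriv_nonneg hf fun t =>
    (mul_nonneg (mul_nonneg hc.le (sub_nonneg.2 (hle t))) (hpos t).le).trans (hderiv t)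
  have hbdd : BddAbove (Set.range f) := ⟨1, Set.forall_mem_range.2 hle⟩
  have hlim : Tendsto f atTop (𝓝 (⨆ t, f t)) := tendsto_atTop_ciSup hmono hbdd
  set L := ⨆ t, f t
  suffices L = 1 by rwa [this] at hlim
  by_contra hL1
  have hL : 0 < 1 - L := sub_pos.2 ((ciSup_le hle).lt_of_ne hL1)
  -- For t ≥ 0 the slope stays above K, so f gains more than 1 by time 1/K.
  set K := c * (1 - L) * f 0
  have hK : 0 < K := mul_pos (mul_pos hc hL) (hpos 0)
  have hKle : ∀ t ∈ interior (Set.Ici (0 : ℝ)), K ≤ deriv f t := by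
    intro t ht
    rw [interior_Ici, Set.mem_Ioi] at ht
    have hft : f t ≤ L := le_ciSup hbdd t
    calc K ≤ c * (1 - f t) * f t :=
          mul_le_mul (mul_le_mul_of_nonneg_left (by linarith) hc.le) (hmono ht.le) (hpos 0).le
            (mul_nonneg hc.le (by linarith))
      _ ≤ deriv f t := hderiv t
  have hgrowth := (convex_Ici 0).mul_sub_le_image_sub_of_le_deriv hf.continuous.continuousOn
    hf.differentiableOn hKle 0 Set.self_mem_Ici (1 / K) (by simp [hK.le]) (by positivity)
  rw [sub_zero, mul_one_div_cancel hK.ne'] at hgrowth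
  linarith [hle (1 / K), hpos 0]

theorem one_sub_OmF (κ : ℝ) (Sp St Ap Np : ℝ → ℝ) (τ : ℝ) :
    1 - OmF κ Sp St Ap Np τ = Sp τ ^ 2 + St τ + Ap τ + NT κ Ap Np τ := by
  unfold OmF
  ring

namespace BianchiB

variable {γ κ : ℝ} {Sp St Dl Ap Np : ℝ → ℝ}

theorem OmF_nonneg (h : BianchiB γ κ Sp St Dl Ap Np) (τ : ℝ) : 0 ≤ OmF κ Sp St Ap Np τ := by
  linarith [one_sub_OmF κ Sp St Ap Np τ, h.con_sum τ]

theorem OmF_le_one (h : BianchiB γ κ Sp St Dl Ap Np) (τ : ℝ) : OmF κ Sp St Ap Np τ ≤ 1 := by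
  linarith [one_sub_OmF κ Sp St Ap Np τ, sq_nonneg (Sp τ), h.con_St τ, h.con_Ap τ, h.con_NT τ]

theorem hasDerivAt_OmF (h : BianchiB γ κ Sp St Dl Ap Np) (τ : ℝ) :
    HasDerivAt (OmF κ Sp St Ap Np) ((2 * qF γ κ Sp St Ap Np τ - (3 * γ - 2)) * OmF κ Sp St Ap Np τ) τ := by
  have hOm : HasDerivAt (OmF κ Sp St Ap Np) _ τ :=
    ((((hasDerivAt_const τ (1 : ℝ)).sub ((h.diff_Sp τ).hasDerivAt.pow 2)).sub
      (h.diff_St τ).hasDerivAt).sub (h.diff_Ap τ).hasDerivAt).sub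
      ((((h.diff_Np τ).hasDerivAt.pow 2).sub ((h.diff_Ap τ).hasDerivAt.const_mul κ)).const_mul
        (1 / 3))
  convert hOm using 1
  rw [h.ev_Sp τ, h.ev_St τ, h.ev_Ap τ, h.ev_Np τ]
  simp only [qF, NT, OmF, Nat.cast_ofNat, Nat.add_one_sub_one, pow_one]
  ring

theorem logistic_le_deriv_OmF (h : BianchiB γ κ Sp St Dl Ap Np) (τ : ℝ) :
    (2 - 3 * γ) * (1 - OmF κ Sp St Ap Np τ) * OmF κ Sp St Ap Np τ
      ≤ deriv (OmF κ Sp St Ap Np) τ := by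
  have hrate : 2 * qF γ κ Sp St Ap Np τ - (3 * γ - 2)
      = 4 * (Sp τ ^ 2 + St τ) + (2 - 3 * γ) * (1 - OmF κ Sp St Ap Np τ) := by
    simp only [qF, OmF]
    ring
  rw [(h.hasDerivAt_OmF τ).deriv, hrate, add_mul, add_comm]
  have := h.con_St τ
  have := h.OmF_nonneg τ
  exact le_add_of_nonneg_right (by positivity)

theorem sq_Sp_le (h : BianchiB γ κ Sp St Dl Ap Np)
    (τ : ℝ) : Sp τ ^ 2 ≤ 1 - OmF κ Sp St Ap Np τ := by
  linarith [one_sub_OmF κ Sp St Ap Np τ, h.con_St τ, h.con_Ap τ, h.con_NT τ]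

theorem St_le (h : BianchiB γ κ Sp St Dl Ap Np) (τ : ℝ) : St τ ≤ 1 - OmF κ Sp St Ap Np τ := by
  linarith [one_sub_OmF κ Sp St Ap Np τ, sq_nonneg (Sp τ), h.con_Ap τ, h.con_NT τ]

theorem Ap_le (h : BianchiB γ κ Sp St Dl Ap Np) (τ : ℝ) : Ap τ ≤ 1 - OmF κ Sp St Ap Np τ := by
  linarith [one_sub_OmF κ Sp St Ap Np τ, sq_nonneg (Sp τ), h.con_St τ, h.con_NT τ]

theorem NT_le (h : BianchiB γ κ Sp St Dl Ap Np)
    (τ : ℝ) : NT κ Ap Np τ ≤ 1 - OmF κ Sp St Ap Np τ := by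
  linarith [one_sub_OmF κ Sp St Ap Np τ, sq_nonneg (Sp τ), h.con_St τ, h.con_Ap τ]

theorem sq_Np_le (h : BianchiB γ κ Sp St Dl Ap Np)
    (τ : ℝ) : Np τ ^ 2 ≤ (3 + |κ|) * (1 - OmF κ Sp St Ap Np τ) := by
  have hNp : Np τ ^ 2 = 3 * NT κ Ap Np τ + κ * Ap τ := by
    simp only [NT]
    ring
  have hκ : κ * Ap τ ≤ |κ| * Ap τ := mul_le_mul_of_nonneg_right (le_abs_self κ) (h.con_Ap τ)
  have hAp := mul_le_mul_of_nonneg_left (h.Ap_le τ) (abs_nonneg κ)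
  linarith [h.NT_le τ]

theorem sq_Dl_le (h : BianchiB γ κ Sp St Dl Ap Np)
    (τ : ℝ) : Dl τ ^ 2 ≤ (1 - OmF κ Sp St Ap Np τ) ^ 2 := by
  have hDl : Dl τ ^ 2 = St τ * NT κ Ap Np τ - Sp τ ^ 2 * Ap τ := by
    linarith [h.con_main τ]
  calc Dl τ ^ 2 ≤ St τ * NT κ Ap Np τ := by
        rw [hDl]
        exact sub_le_self _ (mul_nonneg (sq_nonneg _) (h.con_Ap τ))
    _ ≤ (1 - OmF κ Sp St Ap Np τ) * (1 - OmF κ Sp St Ap Np τ) :=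
        mul_le_mul (h.St_le τ) (h.NT_le τ) (h.con_NT τ) (sub_nonneg.2 (h.OmF_le_one τ))
    _ = (1 - OmF κ Sp St Ap Np τ) ^ 2 := (sq _).symm

theorem tendsto_traj_zero (h : BianchiB γ κ Sp St Dl Ap Np)
    (hOm : Tendsto (OmF κ Sp St Ap Np) atTop (𝓝 1)) :
    Tendsto (traj Sp St Dl Ap Np) atTop (𝓝 ((0 : ℝ), 0, 0, 0, 0)) := by
  have hM : Tendsto (fun τ => 1 - OmF κ Sp St Ap Np τ) atTop (𝓝 0) := by
    simpa using (tendsto_const_nhds (x := (1 : ℝ))).sub hOm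
  have hSp := tendsto_zero_of_sq_le hM h.sq_Sp_le
  have hSt := squeeze_zero h.con_St h.St_le hM
  have hDl := tendsto_zero_of_sq_le (by simpa using hM.pow 2) h.sq_Dl_le
  have hAp := squeeze_zero h.con_Ap h.Ap_le hM
  have hNp := tendsto_zero_of_sq_le (by simpa using hM.const_mul (3 + |κ|)) h.sq_Np_le
  exact hSp.prodMk_nhds (hSt.prodMk_nhds (hDl.prodMk_nhds (hAp.prodMk_nhds hNp)))

end BianchiB

theorem stmt2 (γ κ : ℝ) (Sp St Dl Ap Np : ℝ → ℝ)
    (hsol : BianchiB γ κ Sp St Dl Ap Np)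
    (hinf : Inflationary γ κ Sp St Ap Np) :
    Tendsto (traj Sp St Dl Ap Np) atTop (𝓝 (((0:ℝ), 0, 0, 0, 0) : ℝ × ℝ × ℝ × ℝ × ℝ)) := by
  obtain ⟨hpos, -, hγ⟩ := hinf
  refine hsol.tendsto_traj_zero (tendsto_one_of_logistic_le_deriv (c := 2 - 3 * γ) ?_
    (fun τ => (hsol.hasDerivAt_OmF τ).differentiableAt) hpos hsol.OmF_le_one
    hsol.logistic_le_deriv_OmF)
  linarith
end

section
/- Let Γ be a solution of the Bianchi class B system converging to (s, 1−s², 0, 0, 0) as τ → −∞, for some s ∈ [−1, 1]. Then either Ã(τ) = 0 for all τ, or for every ε > 0 there exists τ_ε such that for all τ ≤ τ_ε one has e^{(4+4s+ε)τ} ≤ Ã(τ) ≤ e^{(4+4s−ε)τ}. -/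
open Real Filter Topology MeasureTheory

/-!
`Ã' = 2(q + 2Σ₊) Ã` is linear in `Ã`, so `Ã(τ) = Ã(0) · exp ∫₀^τ 2(q + 2Σ₊)`: either `Ã ≡ 0`, or
`Ã > 0` and `log Ã` has derivative `2(q + 2Σ₊)`. At the Kasner point `(s, 1 - s², 0, 0, 0)` the
deceleration parameter is `q = 2`, so this derivative tends to `4 + 4s` as `τ → -∞`, and a function
whose derivative tends to `a` at `-∞` is squeezed between `(a + ε) τ` and `(a - ε) τ` near `-∞`.
-/

theorem eq_mul_exp_integral_of_hasDerivAt {f g : ℝ → ℝ} (hf : Continuous f)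
    (hg : ∀ x, HasDerivAt g (f x * g x) x) (a x : ℝ) :
    g x = g a * exp (∫ t in a..x, f t) := by
  have hconst : ∀ u, HasDerivAt (fun u => g u * exp (-∫ t in a..u, f t)) 0 u := fun u =>
    ((hg u).fun_mul (hf.integral_hasStrictDerivAt a u).hasDerivAt.fun_neg.exp).congr_deriv
      (by ring)
  have h := is_const_of_deriv_eq_zero (fun u => (hconst u).differentiableAt)
    (fun u => (hconst u).deriv) x a
  simp only [intervalIntegral.integral_same, neg_zero, exp_zero, mul_one] at h
  rw [← h, mul_assoc, ← exp_add, neg_add_cancel, exp_zero, mul_one]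

theorem eventually_mul_le_of_hasDerivAt {G g : ℝ → ℝ} {b c : ℝ}
    (hG : ∀ x, HasDerivAt G (g x) x) (hg : ∀ᶠ x in atBot, g x ≤ b) (hbc : b < c) :
    ∀ᶠ τ in atBot, c * τ ≤ G τ := by
  obtain ⟨T, hT⟩ := eventually_atBot.1 hg
  have hdiff : Differentiable ℝ G := fun x => (hG x).differentiableAt
  have hderiv_le : ∀ x ∈ interior (Set.Iic T), deriv G x ≤ b := fun x hx => by
    rw [(hG x).deriv]
    exact hT x (Set.mem_Iic.1 (interior_subset hx))
  have hslope : ∀ τ ≤ T, G T - G τ ≤ b * (T - τ) := fun τ hτ =>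
    (convex_Iic T).image_sub_le_mul_sub_of_deriv_le hdiff.continuous.continuousOn
      hdiff.differentiableOn hderiv_le τ hτ T Set.self_mem_Iic hτ
  filter_upwards [eventually_le_atBot T, eventually_le_atBot ((G T - b * T) / (c - b))]
    with τ hτT hτ
  rw [le_div_iff₀ (sub_pos.2 hbc)] at hτ
  linarith [hslope τ hτT]

theorem eventually_mul_le_and_le_mul_of_hasDerivAt {G g : ℝ → ℝ} {a ε : ℝ}
    (hG : ∀ x, HasDerivAt G (g x) x) (hg : Tendsto g atBot (𝓝 a)) (hε : 0 < ε) :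
    ∀ᶠ τ in atBot, (a + ε) * τ ≤ G τ ∧ G τ ≤ (a - ε) * τ := by
  obtain ⟨b₁, hab₁, hb₁⟩ := exists_between (lt_add_of_pos_right a hε)
  obtain ⟨b₂, hab₂, hb₂⟩ := exists_between (lt_add_of_pos_right (-a) hε)
  have hlow := eventually_mul_le_of_hasDerivAt hG (hg.eventually (ge_mem_nhds hab₁)) hb₁
  have hup := eventually_mul_le_of_hasDerivAt (fun x => (hG x).neg)
    (hg.neg.eventually (ge_mem_nhds hab₂)) hb₂
  filter_upwards [hlow, hup] with τ hτlow hτup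
  rw [Pi.neg_apply] at hτup
  exact ⟨hτlow, by linarith⟩

section BianchiB

variable {γ κ : ℝ} {Sp St Dl Ap Np : ℝ → ℝ}

theorem BianchiB.hasDerivAt_Ap (hsol : BianchiB γ κ Sp St Dl Ap Np) (τ : ℝ) :
    HasDerivAt Ap (2 * (qF γ κ Sp St Ap Np τ + 2 * Sp τ) * Ap τ) τ :=
  hsol.ev_Ap τ ▸ (hsol.diff_Ap τ).hasDerivAt

theorem BianchiB.continuous_qF (hsol : BianchiB γ κ Sp St Dl Ap Np) :
    Continuous (qF γ κ Sp St Ap Np) := by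
  have := hsol.diff_Sp.continuous
  have := hsol.diff_St.continuous
  have := hsol.diff_Ap.continuous
  have := hsol.diff_Np.continuous
  unfold qF NT
  fun_prop

theorem tendsto_qF_of_tendsto_kasner {s : ℝ}
    (hconv : Tendsto (traj Sp St Dl Ap Np) atBot (𝓝 (s, 1 - s ^ 2, 0, 0, 0))) :
    Tendsto (qF γ κ Sp St Ap Np) atBot (𝓝 2) := by
  have hcont : Continuous fun p : ℝ × ℝ × ℝ × ℝ × ℝ =>
      (3/2) * (2 - γ) * (p.1 ^ 2 + p.2.1)
        + (1/2) * (3 * γ - 2) * (1 - p.2.2.2.1 - (1/3) * (p.2.2.2.2 ^ 2 - κ * p.2.2.2.1)) := by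
    fun_prop
  convert (hcont.tendsto _).comp hconv using 2
  · rfl
  · ring

end BianchiB

theorem stmt8_general (γ κ s : ℝ) (Sp St Dl Ap Np : ℝ → ℝ)
    (hsol : BianchiB γ κ Sp St Dl Ap Np)
    (hconv : Tendsto (traj Sp St Dl Ap Np) atBot
      (𝓝 ((s, 1 - s^2, 0, 0, 0) : ℝ × ℝ × ℝ × ℝ × ℝ))) :
    (∀ τ, Ap τ = 0) ∨
    (∀ ε > 0, ∃ τε : ℝ, ∀ τ ≤ τε,
      Real.exp ((4 + 4*s + ε)*τ) ≤ Ap τ ∧ Ap τ ≤ Real.exp ((4 + 4*s - ε)*τ)) := by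
  set rate := fun τ => 2 * (qF γ κ Sp St Ap Np τ + 2 * Sp τ)
  have hrate_cont : Continuous rate := by
    have := hsol.diff_Sp.continuous
    have := hsol.continuous_qF
    fun_prop
  have hrate_lim : Tendsto rate atBot (𝓝 (4 + 4 * s)) := by
    have hSp : Tendsto Sp atBot (𝓝 s) := hconv.fst_nhds
    have := ((tendsto_qF_of_tendsto_kasner (γ := γ) (κ := κ) hconv).add
      (hSp.const_mul 2)).const_mul 2
    rwa [show (2 : ℝ) * (2 + 2 * s) = 4 + 4 * s by ring] at this
  have hAp := eq_mul_exp_integral_of_hasDerivAt hrate_cont hsol.hasDerivAt_Ap 0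
  rcases (hsol.con_Ap 0).eq_or_lt with h0 | hpos
  · exact Or.inl fun τ => by rw [hAp τ, ← h0, zero_mul]
  refine Or.inr fun ε hε => ?_
  have hlog : ∀ τ, HasDerivAt (fun u => log (Ap 0) + ∫ t in (0:ℝ)..u, rate t) (rate τ) τ :=
    fun τ => (hrate_cont.integral_hasStrictDerivAt 0 τ).hasDerivAt.const_add _
  obtain ⟨τε, hτε⟩ :=
    eventually_atBot.1 (eventually_mul_le_and_le_mul_of_hasDerivAt hlog hrate_lim hε)
  refine ⟨τε, fun τ hτ => ?_⟩
  rw [hAp τ, ← exp_log hpos, ← exp_add]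
  exact ⟨exp_le_exp.2 (hτε τ hτ).1, exp_le_exp.2 (hτε τ hτ).2⟩

theorem stmt8 (γ κ s : ℝ) (Sp St Dl Ap Np : ℝ → ℝ)
    (hsol : BianchiB γ κ Sp St Dl Ap Np)
    (hs : s ∈ Set.Icc (-1:ℝ) 1)
    (hconv : Tendsto (traj Sp St Dl Ap Np) atBot
      (𝓝 ((s, 1 - s^2, 0, 0, 0) : ℝ × ℝ × ℝ × ℝ × ℝ))) :
    (∀ τ, Ap τ = 0) ∨
    (∀ ε > 0, ∃ τε : ℝ, ∀ τ ≤ τε,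
      Real.exp ((4 + 4*s + ε)*τ) ≤ Ap τ ∧ Ap τ ≤ Real.exp ((4 + 4*s - ε)*τ)) :=
  stmt8_general γ κ s Sp St Dl Ap Np hsol hconv
end

section
/- Let Γ be a solution of the Bianchi class B system such that every α-limit point of Γ lies in the Kasner parabola K, and suppose there exist δ > 0 and τ₀ with Σ̃(τ) > δ for all τ ≤ τ₀. Then one of the following holds: (i) Δ(τ) = 0 and N₊(τ) = 0 for all τ; (ii) there exists τ₁ such that Δ(τ)N₊(τ) > 0 for all τ ≤ τ₁; (iii) there exists τ₁ such that Δ(τ)N₊(τ) < 0 for all τ ≤ τ₁. -/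
open Real Filter Topology MeasureTheory

open Set

/-! Every α-limit point is a Kasner point, where `Ñ = 0`; by compactness `Ñ → 0` as `τ → -∞`, so
`Σ̃ - Ñ > 0` on a half-line `τ ≤ T`. There `Z = Δ N₊` satisfies
`Z' = (3q + 4Σ₊ - 2) Z + 2(Σ̃ - Ñ) N₊² + 6Δ² ≥ (3q + 4Σ₊ - 2) Z`,
so `Z` times an integrating factor is monotone on `τ ≤ T` and `Z` has eventually constant sign.
If `Z` vanishes on a half-line, so does `Z'`, which forces `Δ = N₊ = 0` there; as the equations for
`(Δ, N₊)` are linear with bounded coefficients, Grönwall's inequality propagates this to all `τ`. -/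

theorem abs_mul_add_mul_le_mul_max {a b x y A B : ℝ} (ha : |a| ≤ A) (hb : |b| ≤ B) :
    |a * x + b * y| ≤ (A + B) * max |x| |y| :=
  calc |a * x + b * y| ≤ |a| * |x| + |b| * |y| := by
        simpa only [abs_mul] using abs_add_le (a * x) (b * y)
    _ ≤ A * max |x| |y| + B * max |x| |y| :=
        add_le_add (mul_le_mul ha (le_max_left _ _) (abs_nonneg _) ((abs_nonneg a).trans ha))
          (mul_le_mul hb (le_max_right _ _) (abs_nonneg _) ((abs_nonneg b).trans hb))
    _ = (A + B) * max |x| |y| := by ring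

theorem monotoneOn_exp_neg_integral_mul {Z Z' a : ℝ → ℝ} {D : Set ℝ} (hD : Convex ℝ D)
    (ha : Continuous a) (hZ : ∀ t, HasDerivAt Z (Z' t) t) (h : ∀ t ∈ D, a t * Z t ≤ Z' t) :
    MonotoneOn (fun t => exp (-∫ u in (0)..t, a u) * Z t) D := by
  have hderiv : ∀ t, HasDerivAt (fun t => exp (-∫ u in (0)..t, a u) * Z t)
      (exp (-∫ u in (0)..t, a u) * (Z' t - a t * Z t)) t := fun t =>
    (((ha.integral_hasStrictDerivAt 0 t).hasDerivAt.neg.exp).mul (hZ t)).congr_deriv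
      (by simp only [Pi.neg_apply]; ring)
  refine monotoneOn_of_hasDerivWithinAt_nonneg hD
    (fun t _ => (hderiv t).continuousAt.continuousWithinAt)
    (fun t _ => (hderiv t).hasDerivWithinAt) fun t ht => ?_
  exact mul_nonneg (exp_pos _).le (sub_nonneg.2 (h t (interior_subset ht)))

theorem eventually_trichotomy_of_mul_le_deriv {Z Z' a : ℝ → ℝ} {T : ℝ} (ha : Continuous a)
    (hZ : ∀ t, HasDerivAt Z (Z' t) t) (h : ∀ t ≤ T, a t * Z t ≤ Z' t) :
    (∀ᶠ t in atBot, Z t = 0) ∨ (∀ᶠ t in atBot, 0 < Z t) ∨ (∀ᶠ t in atBot, Z t < 0) := by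
  have hmono := monotoneOn_exp_neg_integral_mul (convex_Iic T) ha hZ h
  have hc : ∀ t, 0 < exp (-∫ u in (0)..t, a u) := fun t => exp_pos _
  simp only [eventually_atBot]
  by_cases hneg : ∃ s ≤ T, Z s < 0
  · obtain ⟨s, hsT, hs⟩ := hneg
    refine Or.inr (Or.inr ⟨s, fun t hts => neg_of_mul_neg_right ?_ (hc t).le⟩)
    exact (hmono (hts.trans hsT) hsT hts).trans_lt (mul_neg_of_pos_of_neg (hc s) hs)
  push Not at hneg
  by_cases hzero : ∃ s ≤ T, Z s = 0
  · obtain ⟨s, hsT, hs⟩ := hzero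
    refine Or.inl ⟨s, fun t hts => le_antisymm ?_ (hneg t (hts.trans hsT))⟩
    have hle := hmono (hts.trans hsT) hsT hts
    simp only [hs, mul_zero] at hle
    exact nonpos_of_mul_nonpos_right hle (hc t)
  · push Not at hzero
    exact Or.inr (Or.inl ⟨T, fun t ht => (hneg t ht).lt_of_ne (hzero t ht).symm⟩)

theorem alphaLimitPt_of_mapClusterPt {Sp St Dl Ap Np : ℝ → ℝ} {p : ℝ × ℝ × ℝ × ℝ × ℝ}
    (hp : MapClusterPt p atBot (traj Sp St Dl Ap Np)) : AlphaLimitPt Sp St Dl Ap Np p := by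
  obtain ⟨t, hconv, ht⟩ := hp.exists_seq_tendsto
  exact ⟨t, ht, hconv⟩

namespace BianchiB

variable {γ κ : ℝ} {Sp St Dl Ap Np : ℝ → ℝ}

theorem abs_Sp_le_one (hsol : BianchiB γ κ Sp St Dl Ap Np) (t : ℝ) : |Sp t| ≤ 1 := by
  rw [← sq_le_one_iff_abs_le_one]
  linarith [hsol.con_St t, hsol.con_Ap t, hsol.con_NT t, hsol.con_sum t]

theorem St_le_one (hsol : BianchiB γ κ Sp St Dl Ap Np) (t : ℝ) : St t ≤ 1 := by
  linarith [sq_nonneg (Sp t), hsol.con_Ap t, hsol.con_NT t, hsol.con_sum t]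

theorem Ap_le_one (hsol : BianchiB γ κ Sp St Dl Ap Np) (t : ℝ) : Ap t ≤ 1 := by
  linarith [sq_nonneg (Sp t), hsol.con_St t, hsol.con_NT t, hsol.con_sum t]

theorem NT_le_one (hsol : BianchiB γ κ Sp St Dl Ap Np) (t : ℝ) : NT κ Ap Np t ≤ 1 := by
  linarith [sq_nonneg (Sp t), hsol.con_St t, hsol.con_Ap t, hsol.con_sum t]

theorem abs_Dl_le_one (hsol : BianchiB γ κ Sp St Dl Ap Np) (t : ℝ) : |Dl t| ≤ 1 := by
  rw [← sq_le_one_iff_abs_le_one]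
  nlinarith [hsol.con_main t, mul_nonneg (sq_nonneg (Sp t)) (hsol.con_Ap t),
    mul_le_one₀ (hsol.St_le_one t) (hsol.con_NT t) (hsol.NT_le_one t)]

theorem abs_Np_le (hsol : BianchiB γ κ Sp St Dl Ap Np) (t : ℝ) : |Np t| ≤ 3 + |κ| := by
  have hκ : κ * Ap t ≤ |κ| :=
    calc κ * Ap t ≤ |κ| * Ap t := mul_le_mul_of_nonneg_right (le_abs_self κ) (hsol.con_Ap t)
      _ ≤ |κ| := mul_le_of_le_one_right (abs_nonneg κ) (hsol.Ap_le_one t)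
  have hNp : Np t ^ 2 = 3 * NT κ Ap Np t + κ * Ap t := by unfold NT; ring
  refine abs_le_of_sq_le_sq ?_ (by positivity)
  nlinarith [hsol.NT_le_one t, abs_nonneg κ]

theorem qF_mem_Icc (hsol : BianchiB γ κ Sp St Dl Ap Np) (t : ℝ) :
    qF γ κ Sp St Ap Np t ∈ Icc (-1) 2 := by
  obtain ⟨hγ0, hγ2⟩ := hsol.hγ
  have hx : 0 ≤ Sp t ^ 2 + St t := by positivity [hsol.con_St t]
  have hxy : Sp t ^ 2 + St t ≤ 1 - Ap t - NT κ Ap Np t := by linarith [hsol.con_sum t]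
  have hy : 1 - Ap t - NT κ Ap Np t ≤ 1 := by linarith [hsol.con_Ap t, hsol.con_NT t]
  unfold qF
  constructor <;> nlinarith [mul_nonneg (sub_nonneg.2 hγ2) (sub_nonneg.2 hxy),
    mul_nonneg (sub_nonneg.2 hγ2) hx, mul_nonneg hγ0 (hx.trans hxy)]

theorem continuous_qF_s10 (hsol : BianchiB γ κ Sp St Dl Ap Np) :
    Continuous (qF γ κ Sp St Ap Np) := by
  have := hsol.diff_Sp.continuous
  have := hsol.diff_St.continuous
  have := hsol.diff_Ap.continuous
  have := hsol.diff_Np.continuous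
  unfold qF NT
  fun_prop

theorem traj_mem_Icc (hsol : BianchiB γ κ Sp St Dl Ap Np) (t : ℝ) :
    traj Sp St Dl Ap Np t ∈ Icc (-1, 0, -1, 0, -(3 + |κ|)) (1, 1, 1, 1, 3 + |κ|) := by
  obtain ⟨hSp₁, hSp₂⟩ := abs_le.1 (hsol.abs_Sp_le_one t)
  obtain ⟨hDl₁, hDl₂⟩ := abs_le.1 (hsol.abs_Dl_le_one t)
  obtain ⟨hNp₁, hNp₂⟩ := abs_le.1 (hsol.abs_Np_le t)
  exact ⟨⟨hSp₁, hsol.con_St t, hDl₁, hsol.con_Ap t, hNp₁⟩,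
    ⟨hSp₂, hsol.St_le_one t, hDl₂, hsol.Ap_le_one t, hNp₂⟩⟩

theorem eventually_traj_mem (hsol : BianchiB γ κ Sp St Dl Ap Np)
    {U : Set (ℝ × ℝ × ℝ × ℝ × ℝ)} (hU : IsOpen U)
    (hlim : ∀ p, AlphaLimitPt Sp St Dl Ap Np p → p ∈ U) :
    ∀ᶠ t in atBot, traj Sp St Dl Ap Np t ∈ U := by
  by_contra hfreq
  rw [not_eventually] at hfreq
  have hK := (isCompact_Icc (a := ((-1, 0, -1, 0, -(3 + |κ|)) : ℝ × ℝ × ℝ × ℝ × ℝ))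
    (b := (1, 1, 1, 1, 3 + |κ|))).diff hU
  obtain ⟨p, hpK, hp⟩ := hK.exists_mapClusterPt_of_frequently
    (hfreq.mono fun t ht => ⟨hsol.traj_mem_Icc t, ht⟩)
  exact hpK.2 (hlim p (alphaLimitPt_of_mapClusterPt hp))

theorem eventually_NT_lt (hsol : BianchiB γ κ Sp St Dl Ap Np)
    (hlim : ∀ p, AlphaLimitPt Sp St Dl Ap Np p → p ∈ Kasner) {ε : ℝ} (hε : 0 < ε) :
    ∀ᶠ t in atBot, NT κ Ap Np t < ε := by
  let F : ℝ × ℝ × ℝ × ℝ × ℝ → ℝ := fun p => (1/3) * (p.2.2.2.2 ^ 2 - κ * p.2.2.2.1)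
  have hU : IsOpen {p | F p < ε} := isOpen_lt (by fun_prop) continuous_const
  refine hsol.eventually_traj_mem hU fun p hp => ?_
  obtain ⟨s, -, rfl⟩ := hlim p hp
  simpa [F] using hε

theorem hasDerivAt_Dl_mul_Np (hsol : BianchiB γ κ Sp St Dl Ap Np) (t : ℝ) :
    HasDerivAt (fun t => Dl t * Np t)
      ((3 * qF γ κ Sp St Ap Np t + 4 * Sp t - 2) * (Dl t * Np t) +
        (2 * (St t - NT κ Ap Np t) * Np t ^ 2 + 6 * Dl t ^ 2)) t := by
  refine ((hsol.diff_Dl t).hasDerivAt.mul (hsol.diff_Np t).hasDerivAt).congr_deriv ?_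
  rw [hsol.ev_Dl, hsol.ev_Np]
  ring

theorem Dl_Np_eq_zero_of_eq_zero (hsol : BianchiB γ κ Sp St Dl Ap Np) {t₀ t : ℝ}
    (h₀ : Dl t₀ = 0 ∧ Np t₀ = 0) (ht : t₀ ≤ t) : Dl t = 0 ∧ Np t = 0 := by
  have hderiv : ∀ x, HasDerivAt (fun x => (Dl x, Np x)) (deriv Dl x, deriv Np x) x := fun x =>
    (hsol.diff_Dl x).hasDerivAt.prodMk (hsol.diff_Np x).hasDerivAt
  have hbound : ∀ x, ‖(deriv Dl x, deriv Np x)‖ ≤ 10 * ‖(Dl x, Np x)‖ := by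
    intro x
    obtain ⟨hq₁, hq₂⟩ := hsol.qF_mem_Icc x
    obtain ⟨hSp₁, hSp₂⟩ := abs_le.1 (hsol.abs_Sp_le_one x)
    have hgap : |2 * (St x - NT κ Ap Np x)| ≤ 2 := by
      rw [abs_le]
      constructor <;> linarith [hsol.con_St x, hsol.St_le_one x, hsol.con_NT x, hsol.NT_le_one x]
    simp only [Prod.norm_def, Real.norm_eq_abs]
    refine max_le ?_ ?_
    · rw [hsol.ev_Dl]
      calc _ ≤ (6 + 2) * max |Dl x| |Np x| := abs_mul_add_mul_le_mul_max
            (abs_le.2 ⟨by linarith, by linarith⟩) hgap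
        _ ≤ 10 * max |Dl x| |Np x| := by gcongr; norm_num
    · rw [hsol.ev_Np, add_comm]
      calc _ ≤ (6 + 4) * max |Dl x| |Np x| := abs_mul_add_mul_le_mul_max
            (by norm_num) (abs_le.2 ⟨by linarith, by linarith⟩)
        _ = 10 * max |Dl x| |Np x| := by norm_num
  have := eq_zero_of_abs_deriv_le_mul_abs_self_of_eq_zero_right
    (fun x _ => (hderiv x).continuousAt.continuousWithinAt)
    (fun x _ => (hderiv x).hasDerivWithinAt) (Prod.ext h₀.1 h₀.2) (fun x _ => hbound x)
    t ⟨ht, le_rfl⟩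
  exact Prod.ext_iff.1 this

theorem eventually_Dl_Np_eq_zero (hsol : BianchiB γ κ Sp St Dl Ap Np)
    (hgap : ∀ᶠ t in atBot, NT κ Ap Np t < St t) (hZ : ∀ᶠ t in atBot, Dl t * Np t = 0) :
    ∀ᶠ t in atBot, Dl t = 0 ∧ Np t = 0 := by
  obtain ⟨s, hs⟩ := eventually_atBot.1 (hgap.and hZ)
  filter_upwards [eventually_lt_atBot s] with t hts
  have hZ0 : HasDerivAt (fun t => Dl t * Np t) 0 t := (hasDerivAt_const t 0).congr_of_eventuallyEq
    (eventually_of_mem (Iio_mem_nhds hts) fun u hu => (hs u hu.le).2)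
  have hsum := (hsol.hasDerivAt_Dl_mul_Np t).unique hZ0
  rw [(hs t hts.le).2, mul_zero, zero_add] at hsum
  have hpos : 0 < 2 * (St t - NT κ Ap Np t) := by linarith [(hs t hts.le).1]
  have hNp : Np t ^ 2 = 0 := by nlinarith [sq_nonneg (Np t), sq_nonneg (Dl t)]
  have hDl : Dl t ^ 2 = 0 := by nlinarith [sq_nonneg (Np t), sq_nonneg (Dl t)]
  exact ⟨pow_eq_zero_iff two_ne_zero |>.1 hDl, pow_eq_zero_iff two_ne_zero |>.1 hNp⟩

theorem Dl_Np_eq_zero_of_eventually (hsol : BianchiB γ κ Sp St Dl Ap Np)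
    (h : ∀ᶠ t in atBot, Dl t = 0 ∧ Np t = 0) (t : ℝ) : Dl t = 0 ∧ Np t = 0 := by
  obtain ⟨s, hs⟩ := eventually_atBot.1 h
  rcases le_total t s with hts | hst
  · exact hs t hts
  · exact hsol.Dl_Np_eq_zero_of_eq_zero (hs s le_rfl) hst

end BianchiB

theorem stmt10 (γ κ δ τ₀ : ℝ) (Sp St Dl Ap Np : ℝ → ℝ)
    (hsol : BianchiB γ κ Sp St Dl Ap Np)
    (hlim : ∀ p : ℝ × ℝ × ℝ × ℝ × ℝ, AlphaLimitPt Sp St Dl Ap Np p → p ∈ Kasner)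
    (hδ : 0 < δ) (hSt : ∀ τ ≤ τ₀, δ < St τ) :
    (∀ τ, Dl τ = 0 ∧ Np τ = 0) ∨
    (∃ τ₁ : ℝ, ∀ τ ≤ τ₁, 0 < Dl τ * Np τ) ∨
    (∃ τ₁ : ℝ, ∀ τ ≤ τ₁, Dl τ * Np τ < 0) := by
  have hgap : ∀ᶠ τ in atBot, NT κ Ap Np τ < St τ :=
    ((hsol.eventually_NT_lt hlim hδ).and (eventually_atBot.2 ⟨τ₀, hSt⟩)).mono
      fun τ h => h.1.trans h.2
  obtain ⟨T, hT⟩ := eventually_atBot.1 hgap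
  have hcoef : Continuous fun τ => 3 * qF γ κ Sp St Ap Np τ + 4 * Sp τ - 2 := by
    have := hsol.continuous_qF_s10
    have := hsol.diff_Sp.continuous
    fun_prop
  have hsign := eventually_trichotomy_of_mul_le_deriv (T := T) hcoef hsol.hasDerivAt_Dl_mul_Np
    fun τ hτ => le_add_of_nonneg_right <| add_nonneg
      (mul_nonneg (mul_nonneg zero_le_two (sub_nonneg.2 (hT τ hτ).le)) (sq_nonneg _))
      (mul_nonneg (by norm_num) (sq_nonneg _))
  rcases hsign with hzero | hpos | hneg
  · exact Or.inl (hsol.Dl_Np_eq_zero_of_eventually (hsol.eventually_Dl_Np_eq_zero hgap hzero))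
  · exact Or.inr (Or.inl (eventually_atBot.1 hpos))
  · exact Or.inr (Or.inr (eventually_atBot.1 hneg))
end

section
/- Let Γ be a solution of the Bianchi class B system converging to (s, 1−s², 0, 0, 0) as τ → −∞. (a) If s ∈ (−1, 1) and Δ(τ)N₊(τ) > 0 for all τ ≤ τ₀, then for every ε > 0 there exists τ_ε such that for all τ ≤ τ_ε: e^{(2+2s+2√(3(1−s²))+ε)τ} ≤ |Δ(τ) + √((1−s²)/3)·N₊(τ)| ≤ e^{(2+2s+2√(3(1−s²))−ε)τ}. (b) If s ∈ (−1, 1) and Δ(τ)N₊(τ) < 0 for all τ ≤ τ₀, then for every ε > 0 there exists τ_ε such that for all τ ≤ τ_ε: e^{(2+2s−2√(3(1−s²))+ε)τ} ≤ |Δ(τ) − √((1−s²)/3)·N₊(τ)| ≤ e^{(2+2s−2√(3(1−s²))−ε)τ}. (c) If s = 1 and Δ(τ)N₊(τ) > 0 (respectively < 0) for all τ ≤ τ₀, then for every ε > 0 there exist ε̂ > 0 and τ_ε such that for all τ ≤ τ_ε: e^{(4+ε)τ} ≤ |Δ(τ) + ε̂·N₊(τ)| ≤ e^{(4−ε)τ}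 (respectively e^{(4+ε)τ} ≤ |Δ(τ) − ε̂·N₊(τ)| ≤ e^{(4−ε)τ}). -/
open Real Filter Topology MeasureTheory

open Set

/-!
Near the Kasner point `(s, 1 - s², 0, 0, 0)` one has `q → 2`, `Σ₊ → s`, `Σ̃ → 1 - s²`, `Ñ → 0`,
so the `(Δ, N₊)` equations are asymptotically linear with matrix
`[[2 + 2s, 2(1 - s²)], [6, 2 + 2s]]`.
For `3b² = 1 - s²` the combination `f = Δ + b N₊` is an approximate eigenvector, with eigenvalue
`λ = 2 + 2s + 6b = 2 + 2s ± 2√(3(1 - s²))`. When `b Δ N₊ > 0` we have `|f| = |Δ| + |b| |N₊|`, so the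
error terms in `f' - λ f` are `o(|f|)`; hence `log |f τ| = λ τ + o(|τ|)` as `τ → -∞`.
At `s = 1` the matrix is degenerate and any small `b` of the right sign gives `λ = 4` up to `6|b|`.
-/

lemma abs_add_mul_eq_of_pos {x y b : ℝ} (h : 0 < b * (x * y)) :
    |x + b * y| = |x| + |b| * |y| := by
  rw [← abs_mul, abs_add_eq_add_abs_iff]
  rcases lt_or_gt_of_ne (left_ne_zero_of_mul (right_ne_zero_of_mul h.ne')) with hx | hx
  · exact Or.inr ⟨hx.le, by nlinarith⟩
  · exact Or.inl ⟨hx.le, by nlinarith⟩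

lemma add_mul_ne_zero_of_pos {x y b : ℝ} (h : 0 < b * (x * y)) : x + b * y ≠ 0 := by
  rw [← abs_pos, abs_add_mul_eq_of_pos h]
  have := abs_pos.2 (left_ne_zero_of_mul (right_ne_zero_of_mul h.ne'))
  nlinarith [abs_nonneg b, abs_nonneg y]

lemma abs_mul_add_mul_le_of_pos {x y b c₁ c₂ : ℝ} (h : 0 < b * (x * y)) :
    |c₁ * x + c₂ * y| ≤ (|c₁| + |c₂| / |b|) * |x + b * y| := by
  have hb : 0 < |b| := abs_pos.2 (left_ne_zero_of_mul h.ne')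
  have hsum := abs_add_mul_eq_of_pos h
  have hx : |x| ≤ |x + b * y| := by rw [hsum]; nlinarith [abs_nonneg y]
  have hy : |b| * |y| ≤ |x + b * y| := by rw [hsum]; nlinarith [abs_nonneg x]
  calc |c₁ * x + c₂ * y| ≤ |c₁| * |x| + |c₂| / |b| * (|b| * |y|) := by
        rw [← mul_assoc, div_mul_cancel₀ _ hb.ne', ← abs_mul, ← abs_mul]
        exact abs_add_le _ _
    _ ≤ |c₁| * |x + b * y| + |c₂| / |b| * |x + b * y| := by gcongr
    _ = (|c₁| + |c₂| / |b|) * |x + b * y| := by ring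

lemma eventually_exp_le_abs_le_exp {f : ℝ → ℝ} (hf : Differentiable ℝ f) {l ε : ℝ} (hε : 0 < ε)
    (h : ∀ᶠ τ in atBot, f τ ≠ 0 ∧ |deriv f τ - l * f τ| ≤ ε / 2 * |f τ|) :
    ∀ᶠ τ in atBot, exp ((l + ε) * τ) ≤ |f τ| ∧ |f τ| ≤ exp ((l - ε) * τ) := by
  obtain ⟨T, hT⟩ := h.exists_forall_of_atBot
  set g : ℝ → ℝ := fun τ => log (f τ) - l * τ
  have hg : ∀ τ ∈ Iic T, HasDerivWithinAt g (deriv f τ / f τ - l) (Iic T) τ := fun τ hτ => by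
    have := ((hf τ).hasDerivAt.log (hT τ hτ).1).sub ((hasDerivAt_id τ).const_mul l)
    rw [mul_one] at this
    exact this.hasDerivWithinAt
  have hg' : ∀ τ ∈ Iic T, ‖deriv f τ / f τ - l‖ ≤ ε / 2 := fun τ hτ => by
    obtain ⟨hne, hle⟩ := hT τ hτ
    rw [norm_eq_abs, show deriv f τ / f τ - l = (deriv f τ - l * f τ) / f τ by field_simp,
      abs_div, div_le_iff₀ (abs_pos.2 hne)]
    exact hle
  filter_upwards [eventually_le_atBot T,
    (tendsto_id.const_mul_atBot hε).eventually_le_atBot (-(ε * T) - 2 * |g T|)] with τ hτT hτ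
  have hlip : |g τ - g T| ≤ ε / 2 * (T - τ) := by
    simpa [abs_of_nonpos (sub_nonpos.2 hτT)] using
      (convex_Iic T).norm_image_sub_le_of_norm_hasDerivWithin_le hg hg' (mem_Iic.2 le_rfl) hτT
  have hgτ : |g τ| ≤ -(ε * τ) := by
    have := abs_sub_abs_le_abs_sub (g τ) (g T)
    simp only [id] at hτ
    linarith
  rw [← exp_log_eq_abs (hT τ hτT).1]
  have hlog : log (f τ) = g τ + l * τ := by ring
  rw [abs_le] at hgτ
  constructor <;> exact exp_le_exp.2 (by rw [hlog]; linarith)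

lemma sqrt_three_mul (x : ℝ) : √(3 * x) = 3 * √(x / 3) := by
  rw [show 3 * x = 3 ^ 2 * (x / 3) by ring, sqrt_mul (by norm_num), sqrt_sq (by norm_num)]

namespace BianchiB

variable {γ κ s : ℝ} {Sp St Dl Ap Np : ℝ → ℝ}

lemma deriv_add_mul (hsol : BianchiB γ κ Sp St Dl Ap Np) (b τ : ℝ) :
    deriv (fun τ => Dl τ + b * Np τ) τ =
      (2 * (qF γ κ Sp St Ap Np τ + Sp τ - 1) + 6 * b) * Dl τ +
        (2 * (St τ - NT κ Ap Np τ) + b * (qF γ κ Sp St Ap Np τ + 2 * Sp τ)) * Np τ := by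
  rw [deriv_fun_add (hsol.diff_Dl τ) ((hsol.diff_Np τ).const_mul b),
    deriv_const_mul b (hsol.diff_Np τ), hsol.ev_Dl, hsol.ev_Np]
  ring

lemma tendsto_of_tendsto_kasner
    (hconv : Tendsto (traj Sp St Dl Ap Np) atBot
      (𝓝 ((s, 1 - s^2, 0, 0, 0) : ℝ × ℝ × ℝ × ℝ × ℝ))) :
    Tendsto Sp atBot (𝓝 s) ∧ Tendsto St atBot (𝓝 (1 - s ^ 2)) ∧
      Tendsto (NT κ Ap Np) atBot (𝓝 0) ∧ Tendsto (qF γ κ Sp St Ap Np) atBot (𝓝 2) := by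
  have hSp : Tendsto Sp atBot (𝓝 s) := hconv.fst_nhds
  have hSt : Tendsto St atBot (𝓝 (1 - s ^ 2)) := hconv.snd_nhds.fst_nhds
  have hAp : Tendsto Ap atBot (𝓝 0) := hconv.snd_nhds.snd_nhds.snd_nhds.fst_nhds
  have hNp : Tendsto Np atBot (𝓝 0) := hconv.snd_nhds.snd_nhds.snd_nhds.snd_nhds
  have hNT : Tendsto (NT κ Ap Np) atBot (𝓝 0) := by
    have := (((hNp.pow 2).sub (hAp.const_mul κ)).const_mul (1 / 3) :
      Tendsto (NT κ Ap Np) atBot _)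
    rwa [show (1 : ℝ) / 3 * (0 ^ 2 - κ * 0) = 0 by ring] at this
  refine ⟨hSp, hSt, hNT, ?_⟩
  have := ((((hSp.pow 2).add hSt).const_mul ((3 / 2) * (2 - γ))).add
    (((tendsto_const_nhds (x := (1 : ℝ))).sub hAp).sub hNT |>.const_mul ((1 / 2) * (3 * γ - 2))) :
      Tendsto (qF γ κ Sp St Ap Np) atBot _)
  rwa [show 3 / 2 * (2 - γ) * (s ^ 2 + (1 - s ^ 2)) + 1 / 2 * (3 * γ - 2) * (1 - 0 - 0) = 2 by ring]
    at this

/-- The defect measures how far `Δ + b N₊` is from an eigenvector with eigenvalue `l` of the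
linearisation at the Kasner point. -/
theorem exists_exp_le_abs_add_mul_le_exp (hsol : BianchiB γ κ Sp St Dl Ap Np)
    (hconv : Tendsto (traj Sp St Dl Ap Np) atBot
      (𝓝 ((s, 1 - s^2, 0, 0, 0) : ℝ × ℝ × ℝ × ℝ × ℝ)))
    {b l τ₀ ε : ℝ} (hε : 0 < ε) (hsgn : ∀ τ ≤ τ₀, 0 < b * (Dl τ * Np τ))
    (hdefect :
      |2 + 2 * s + 6 * b - l| + |2 * (1 - s ^ 2) + b * (2 + 2 * s) - l * b| / |b| < ε / 2) :
    ∃ τε : ℝ, ∀ τ ≤ τε,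
      exp ((l + ε) * τ) ≤ |Dl τ + b * Np τ| ∧ |Dl τ + b * Np τ| ≤ exp ((l - ε) * τ) := by
  obtain ⟨hSp, hSt, hNT, hq⟩ := tendsto_of_tendsto_kasner (γ := γ) (κ := κ) hconv
  have hcoeff : Tendsto (fun τ => |2 * (qF γ κ Sp St Ap Np τ + Sp τ - 1) + 6 * b - l| +
      |2 * (St τ - NT κ Ap Np τ) + b * (qF γ κ Sp St Ap Np τ + 2 * Sp τ) - l * b| / |b|) atBot
      (𝓝 (|2 + 2 * s + 6 * b - l| + |2 * (1 - s ^ 2) + b * (2 + 2 * s) - l * b| / |b|)) := by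
    convert ((((((hq.add hSp).sub_const 1).const_mul 2).add_const (6 * b)).sub_const l).abs).add
      (((((hSt.sub hNT).const_mul 2).add ((hq.add (hSp.const_mul 2)).const_mul b)).sub_const
        (l * b)).abs.div_const |b|) using 3 <;> ring_nf
  refine (eventually_exp_le_abs_le_exp (f := fun τ => Dl τ + b * Np τ)
    (hsol.diff_Dl.add (hsol.diff_Np.const_mul b)) hε ?_).exists_forall_of_atBot
  filter_upwards [eventually_atBot.2 ⟨τ₀, hsgn⟩, hcoeff.eventually (gt_mem_nhds hdefect)]
    with τ hpos hsmall
  refine ⟨add_mul_ne_zero_of_pos hpos, ?_⟩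
  rw [deriv_add_mul hsol]
  calc _ = |(2 * (qF γ κ Sp St Ap Np τ + Sp τ - 1) + 6 * b - l) * Dl τ +
        (2 * (St τ - NT κ Ap Np τ) + b * (qF γ κ Sp St Ap Np τ + 2 * Sp τ) - l * b) * Np τ| := by
        congr 1; ring
    _ ≤ _ := abs_mul_add_mul_le_of_pos hpos
    _ ≤ ε / 2 * |Dl τ + b * Np τ| := by gcongr

theorem exists_exp_le_abs_add_mul_le_exp_of_eigen (hsol : BianchiB γ κ Sp St Dl Ap Np)
    (hconv : Tendsto (traj Sp St Dl Ap Np) atBot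
      (𝓝 ((s, 1 - s^2, 0, 0, 0) : ℝ × ℝ × ℝ × ℝ × ℝ)))
    {b l τ₀ ε : ℝ} (hε : 0 < ε) (hsgn : ∀ τ ≤ τ₀, 0 < b * (Dl τ * Np τ))
    (hb : 3 * b ^ 2 = 1 - s ^ 2) (hl : l = 2 + 2 * s + 6 * b) :
    ∃ τε : ℝ, ∀ τ ≤ τε,
      exp ((l + ε) * τ) ≤ |Dl τ + b * Np τ| ∧ |Dl τ + b * Np τ| ≤ exp ((l - ε) * τ) := by
  refine hsol.exists_exp_le_abs_add_mul_le_exp hconv hε hsgn ?_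
  rw [hl, show 2 * (1 - s ^ 2) + b * (2 + 2 * s) - (2 + 2 * s + 6 * b) * b = 0 by
    linear_combination (-2) * hb]
  simpa using half_pos hε

theorem exists_exp_le_abs_add_mul_le_exp_of_kasner_one (hsol : BianchiB γ κ Sp St Dl Ap Np)
    (hconv : Tendsto (traj Sp St Dl Ap Np) atBot
      (𝓝 ((1, 1 - 1^2, 0, 0, 0) : ℝ × ℝ × ℝ × ℝ × ℝ)))
    {b τ₀ ε : ℝ} (hε : 0 < ε) (hsgn : ∀ τ ≤ τ₀, 0 < b * (Dl τ * Np τ)) (hb : 12 * |b| < ε) :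
    ∃ τε : ℝ, ∀ τ ≤ τε,
      exp ((4 + ε) * τ) ≤ |Dl τ + b * Np τ| ∧ |Dl τ + b * Np τ| ≤ exp ((4 - ε) * τ) := by
  refine hsol.exists_exp_le_abs_add_mul_le_exp hconv hε hsgn ?_
  rw [show (2 : ℝ) + 2 * 1 + 6 * b - 4 = 6 * b by ring,
    show 2 * (1 - (1 : ℝ) ^ 2) + b * (2 + 2 * 1) - 4 * b = 0 by ring, abs_zero, zero_div, add_zero,
    abs_mul]
  norm_num
  linarith

end BianchiB

theorem stmt11 (γ κ s τ₀ : ℝ) (Sp St Dl Ap Np : ℝ → ℝ)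
    (hsol : BianchiB γ κ Sp St Dl Ap Np)
    (hconv : Tendsto (traj Sp St Dl Ap Np) atBot
      (𝓝 ((s, 1 - s^2, 0, 0, 0) : ℝ × ℝ × ℝ × ℝ × ℝ))) :
    (s ∈ Set.Ioo (-1:ℝ) 1 → (∀ τ ≤ τ₀, 0 < Dl τ * Np τ) →
      ∀ ε > 0, ∃ τε : ℝ, ∀ τ ≤ τε,
        Real.exp ((2 + 2*s + 2*Real.sqrt (3*(1 - s^2)) + ε)*τ) ≤
          |Dl τ + Real.sqrt ((1 - s^2)/3) * Np τ| ∧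
        |Dl τ + Real.sqrt ((1 - s^2)/3) * Np τ| ≤
          Real.exp ((2 + 2*s + 2*Real.sqrt (3*(1 - s^2)) - ε)*τ)) ∧
    (s ∈ Set.Ioo (-1:ℝ) 1 → (∀ τ ≤ τ₀, Dl τ * Np τ < 0) →
      ∀ ε > 0, ∃ τε : ℝ, ∀ τ ≤ τε,
        Real.exp ((2 + 2*s - 2*Real.sqrt (3*(1 - s^2)) + ε)*τ) ≤
          |Dl τ - Real.sqrt ((1 - s^2)/3) * Np τ| ∧
        |Dl τ - Real.sqrt ((1 - s^2)/3) * Np τ| ≤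
          Real.exp ((2 + 2*s - 2*Real.sqrt (3*(1 - s^2)) - ε)*τ)) ∧
    (s = 1 →
      ((∀ τ ≤ τ₀, 0 < Dl τ * Np τ) →
        ∀ ε > 0, ∃ εh > 0, ∃ τε : ℝ, ∀ τ ≤ τε,
          Real.exp ((4 + ε)*τ) ≤ |Dl τ + εh * Np τ| ∧
          |Dl τ + εh * Np τ| ≤ Real.exp ((4 - ε)*τ)) ∧
      ((∀ τ ≤ τ₀, Dl τ * Np τ < 0) →
        ∀ ε > 0, ∃ εh > 0, ∃ τε : ℝ, ∀ τ ≤ τε,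
          Real.exp ((4 + ε)*τ) ≤ |Dl τ - εh * Np τ| ∧
          |Dl τ - εh * Np τ| ≤ Real.exp ((4 - ε)*τ))) := by
  have eigen_sq (hs : s ∈ Ioo (-1 : ℝ) 1) : 3 * √((1 - s ^ 2) / 3) ^ 2 = 1 - s ^ 2 := by
    rw [sq_sqrt (by nlinarith [hs.1, hs.2])]; ring
  have eigen_pos (hs : s ∈ Ioo (-1 : ℝ) 1) : 0 < √((1 - s ^ 2) / 3) :=
    sqrt_pos.2 (by nlinarith [hs.1, hs.2])
  refine ⟨fun hs hsgn ε hε => ?_, fun hs hsgn ε hε => ?_, ?_⟩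
  · exact hsol.exists_exp_le_abs_add_mul_le_exp_of_eigen hconv hε
      (fun τ hτ => mul_pos (eigen_pos hs) (hsgn τ hτ)) (eigen_sq hs)
      (by rw [sqrt_three_mul]; ring)
  · simpa only [neg_mul, ← sub_eq_add_neg] using
      hsol.exists_exp_le_abs_add_mul_le_exp_of_eigen hconv hε
        (fun τ hτ => mul_pos_of_neg_of_neg (neg_neg_of_pos (eigen_pos hs)) (hsgn τ hτ))
        (by rw [neg_sq, eigen_sq hs]) (by rw [sqrt_three_mul]; ring)
  rintro rfl
  refine ⟨fun hsgn ε hε => ⟨ε / 24, by positivity, ?_⟩,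
    fun hsgn ε hε => ⟨ε / 24, by positivity, ?_⟩⟩
  · exact hsol.exists_exp_le_abs_add_mul_le_exp_of_kasner_one hconv hε
      (fun τ hτ => mul_pos (by positivity) (hsgn τ hτ))
      (by rw [abs_of_pos (by positivity)]; linarith)
  · simpa only [neg_mul, ← sub_eq_add_neg] using
      hsol.exists_exp_le_abs_add_mul_le_exp_of_kasner_one (b := -(ε / 24)) hconv hε
        (fun τ hτ => mul_pos_of_neg_of_neg (by linarith) (hsgn τ hτ))
        (by rw [abs_neg, abs_of_pos (by positivity)]; linarith)
end
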